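/- arXiv:2010.14146 — 2 statements merged into one kernel-verified Lean document; each statement's English description precedes it below -/
import Mathlib

section
/- Theorem 1(iii) (strict suboptimality of non-efficient instruments): Suppose Δ_{T,A} and Λ_T are invertible and that for some t ∈ {1,…,T} the instrument deviates from every efficient one with positive probability, i.e., for every invertible deterministic C ∈ ℝ^{q×q} one has ℙ(A_t ≠ C D_tᵀ S_t⁻¹) > 0. Then Δ_{T,A}⁻¹ Σ_{T,A} (Δ_{T,A}⁻¹)ᵀ − Λ_T⁻¹ is positive semidefinite and has a strictly positive diagonal entry; in particular it is nonzero. -/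
/-!
Put `X_t = Δ⁻¹ A_t - Λ⁻¹ D_tᵀ S_t⁻¹`. Expanding `X_t S_t X_tᵀ` and averaging its expectations
over `t`, the two cross terms and the last term average to `Λ⁻ᵀ`, `Λ⁻¹` and `Λ⁻ᵀ`, because `Δ` and
`Λ` are themselves these averages; what remains is `Δ⁻¹ Σ Δ⁻ᵀ - Λ⁻¹`. So this matrix is an average
of expectations of the positive semidefinite matrices `X_t S_t X_tᵀ`. If all its diagonal entries
vanished, then `X_t S_t X_tᵀ` would have zero diagonal almost surely, hence `X_t = 0` almost surely
as `S_t` is positive definite, i.e. `A_t = Δ Λ⁻¹ D_tᵀ S_t⁻¹` almost surely: `A_t` would be an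
efficient instrument.
-/

open MeasureTheory Matrix

/-- Entrywise expectation of a random matrix. -/
noncomputable def matExp {Ω : Type*} [MeasureSpace Ω] {m n : Type*}
    (M : Ω → Matrix m n ℝ) : Matrix m n ℝ :=
  Matrix.of fun i j => ∫ ω, M ω i j

section MatExp

variable {Ω : Type*} [MeasureSpace Ω] {m n p r : Type*}

theorem matExp_congr_ae {M N : Ω → Matrix m n ℝ} (h : ∀ᵐ ω, M ω = N ω) :
    matExp M = matExp N := by
  ext i j
  exact integral_congr_ae (h.mono fun ω hω => congrFun₂ hω i j)

theorem matExp_transpose (M : Ω → Matrix m n ℝ) :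
    matExp (fun ω => (M ω)ᵀ) = (matExp M)ᵀ :=
  rfl

theorem matExp_add {M N : Ω → Matrix m n ℝ} (hM : ∀ i j, Integrable fun ω => M ω i j)
    (hN : ∀ i j, Integrable fun ω => N ω i j) :
    matExp (fun ω => M ω + N ω) = matExp M + matExp N := by
  ext i j
  exact integral_add (hM i j) (hN i j)

theorem matExp_sub {M N : Ω → Matrix m n ℝ} (hM : ∀ i j, Integrable fun ω => M ω i j)
    (hN : ∀ i j, Integrable fun ω => N ω i j) :
    matExp (fun ω => M ω - N ω) = matExp M - matExp N := by
  ext i j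
  exact integral_sub (hM i j) (hN i j)

variable [Fintype m] [Fintype n]

theorem LinearMap.apply_eq_sum_mul_apply_single [DecidableEq m] [DecidableEq n]
    (L : Matrix m n ℝ →ₗ[ℝ] ℝ) (N : Matrix m n ℝ) :
    L N = ∑ i, ∑ j, N i j * L (Matrix.single i j 1) := by
  conv_lhs => rw [matrix_eq_sum_single N]
  simp only [map_sum]
  refine Finset.sum_congr rfl fun i _ => Finset.sum_congr rfl fun j _ => ?_
  rw [← smul_eq_mul, ← map_smul, smul_single, smul_eq_mul, mul_one]

theorem integrable_linearMap_comp (L : Matrix m n ℝ →ₗ[ℝ] ℝ) {M : Ω → Matrix m n ℝ}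
    (hM : ∀ i j, Integrable fun ω => M ω i j) : Integrable fun ω => L (M ω) := by
  classical
  rw [funext fun ω => L.apply_eq_sum_mul_apply_single (M ω)]
  exact integrable_finsetSum _ fun i _ => integrable_finsetSum _ fun j _ =>
    (hM i j).mul_const _

theorem integral_linearMap_comp (L : Matrix m n ℝ →ₗ[ℝ] ℝ) {M : Ω → Matrix m n ℝ}
    (hM : ∀ i j, Integrable fun ω => M ω i j) : ∫ ω, L (M ω) = L (matExp M) := by
  classical
  have hterm : ∀ i j, Integrable fun ω => M ω i j * L (Matrix.single i j 1) :=
    fun i j => (hM i j).mul_const _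
  rw [funext fun ω => L.apply_eq_sum_mul_apply_single (M ω), L.apply_eq_sum_mul_apply_single,
    integral_finsetSum _ fun i _ => integrable_finsetSum _ fun j _ => hterm i j]
  refine Finset.sum_congr rfl fun i _ => ?_
  rw [integral_finsetSum _ fun j _ => hterm i j]
  exact Finset.sum_congr rfl fun j _ => integral_mul_const _ _

def Matrix.mulMulEntryLinearMap (B : Matrix p m ℝ) (C : Matrix n r ℝ) (i : p) (j : r) :
    Matrix m n ℝ →ₗ[ℝ] ℝ where
  toFun N := (B * N * C) i j
  map_add' _ _ := by simp [Matrix.mul_add, Matrix.add_mul]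
  map_smul' _ _ := by simp

theorem integrable_mul_mul_apply (B : Matrix p m ℝ) (C : Matrix n r ℝ)
    {M : Ω → Matrix m n ℝ} (hM : ∀ i j, Integrable fun ω => M ω i j) (i : p) (j : r) :
    Integrable fun ω => (B * M ω * C) i j :=
  integrable_linearMap_comp (mulMulEntryLinearMap B C i j) hM

theorem matExp_mul_mul (B : Matrix p m ℝ) (C : Matrix n r ℝ) {M : Ω → Matrix m n ℝ}
    (hM : ∀ i j, Integrable fun ω => M ω i j) :
    matExp (fun ω => B * M ω * C) = B * matExp M * C := by
  ext i j
  exact integral_linearMap_comp (mulMulEntryLinearMap B C i j) hM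

theorem matExp_posSemidef {M : Ω → Matrix n n ℝ} (hM : ∀ᵐ ω, (M ω).PosSemidef)
    (hint : ∀ i j, Integrable fun ω => M ω i j) : (matExp M).PosSemidef := by
  refine .of_dotProduct_mulVec_nonneg ?_ fun x => ?_
  · rw [IsHermitian, conjTranspose_eq_transpose_of_trivial, ← matExp_transpose]
    exact matExp_congr_ae (hM.mono fun ω hω => hω.isHermitian.eq)
  · let L : Matrix n n ℝ →ₗ[ℝ] ℝ :=
      { toFun N := x ⬝ᵥ N *ᵥ x
        map_add' _ _ := by simp [add_mulVec]
        map_smul' _ _ := by simp [smul_mulVec] }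
    change 0 ≤ L (matExp M)
    rw [← integral_linearMap_comp L hint]
    exact integral_nonneg_of_ae
      (hM.mono fun ω hω => by simpa [L] using hω.dotProduct_mulVec_nonneg x)

end MatExp

section Sandwich

variable {Ω : Type*} [MeasureSpace Ω] {k r : Type*} [Fintype k]

theorem mul_mul_transpose_apply_self (X : Matrix r k ℝ) (S : Matrix k k ℝ) (j : r) :
    (X * S * Xᵀ) j j = X j ⬝ᵥ S *ᵥ X j := by
  rw [dotProduct_mulVec]
  rfl

variable [Finite r]

theorem Matrix.PosSemidef.mul_mul_transpose_same {S : Matrix k k ℝ} (hS : S.PosSemidef)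
    (X : Matrix r k ℝ) : (X * S * Xᵀ).PosSemidef := by
  simpa using hS.mul_mul_conjTranspose_same X

theorem exists_pos_diag_matExp_mul_mul_transpose {X : Ω → Matrix r k ℝ}
    {S : Ω → Matrix k k ℝ} (hS : ∀ᵐ ω, (S ω).PosDef)
    (hint : ∀ i j, Integrable fun ω => (X ω * S ω * (X ω)ᵀ) i j) (hX : ¬ ∀ᵐ ω, X ω = 0) :
    ∃ j, 0 < matExp (fun ω => X ω * S ω * (X ω)ᵀ) j j := by
  by_contra! hle
  refine hX ?_
  have hnonneg : ∀ j, 0 ≤ᵐ[volume] fun ω => (X ω * S ω * (X ω)ᵀ) j j := fun j =>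
    hS.mono fun ω hω => (hω.posSemidef.mul_mul_transpose_same (X ω)).diag_nonneg
  have hzero : ∀ j, ∀ᵐ ω, (X ω * S ω * (X ω)ᵀ) j j = 0 := fun j =>
    (integral_eq_zero_iff_of_nonneg_ae (hnonneg j) (hint j j)).mp
      (le_antisymm (hle j) (integral_nonneg_of_ae (hnonneg j)))
  filter_upwards [ae_all_iff.mpr hzero, hS] with ω hω hpd
  ext j i
  suffices X ω j = 0 from congrFun this i
  by_contra hne
  have hpos := hpd.dotProduct_mulVec_pos hne
  rw [star_trivial, ← mul_mul_transpose_apply_self, hω j] at hpos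
  exact lt_irrefl _ hpos

end Sandwich

section Instruments

variable {k q r : Type*} [Fintype k] [DecidableEq k] [Fintype q]

noncomputable def instrumentDeviation (P Q : Matrix r q ℝ) (S : Matrix k k ℝ)
    (D : Matrix k q ℝ) (A : Matrix q k ℝ) : Matrix r k ℝ :=
  P * A - Q * Dᵀ * S⁻¹

theorem instrumentDeviation_mul_mul_transpose (P Q : Matrix r q ℝ) {S : Matrix k k ℝ}
    (hS : S.IsSymm) (hSu : IsUnit S.det) (D : Matrix k q ℝ) (A : Matrix q k ℝ) :
    instrumentDeviation P Q S D A * S * (instrumentDeviation P Q S D A)ᵀ =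
      P * (A * S * Aᵀ) * Pᵀ - P * (A * D) * Qᵀ - Q * (A * D)ᵀ * Pᵀ
        + Q * (Dᵀ * S⁻¹ * D) * Qᵀ := by
  have hSinv : (S⁻¹)ᵀ = S⁻¹ := by rw [transpose_nonsing_inv, hS.eq]
  simp only [instrumentDeviation, Matrix.sub_mul, Matrix.mul_sub, transpose_sub, transpose_mul,
    transpose_transpose, hSinv, Matrix.mul_assoc, mul_nonsing_inv_cancel_left _ _ hSu,
    nonsing_inv_mul_cancel_left _ _ hSu]
  abel

variable {Ω : Type*} [MeasureSpace Ω]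

theorem ae_instrumentDeviation_mul_mul_transpose {S : Ω → Matrix k k ℝ}
    (hS : ∀ᵐ ω, (S ω).PosDef) (D : Ω → Matrix k q ℝ) (A : Ω → Matrix q k ℝ)
    (P Q : Matrix r q ℝ) :
    ∀ᵐ ω, instrumentDeviation P Q (S ω) (D ω) (A ω) * S ω *
        (instrumentDeviation P Q (S ω) (D ω) (A ω))ᵀ =
      P * (A ω * S ω * (A ω)ᵀ) * Pᵀ - P * (A ω * D ω) * Qᵀ - Q * (A ω * D ω)ᵀ * Pᵀ
        + Q * ((D ω)ᵀ * (S ω)⁻¹ * D ω) * Qᵀ :=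
  hS.mono fun ω hω => instrumentDeviation_mul_mul_transpose P Q
    (isHermitian_iff_isSymm.mp hω.isHermitian) hω.det_pos.ne'.isUnit (D ω) (A ω)

theorem integrable_and_matExp_instrumentDeviation_mul_mul_transpose
    {S : Ω → Matrix k k ℝ} {D : Ω → Matrix k q ℝ} {A : Ω → Matrix q k ℝ}
    (hS : ∀ᵐ ω, (S ω).PosDef) (hASA : ∀ i j, Integrable fun ω => (A ω * S ω * (A ω)ᵀ) i j)
    (hAD : ∀ i j, Integrable fun ω => (A ω * D ω) i j)
    (hDSD : ∀ i j, Integrable fun ω => ((D ω)ᵀ * (S ω)⁻¹ * D ω) i j) (P Q : Matrix r q ℝ) :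
    (∀ i j, Integrable fun ω => (instrumentDeviation P Q (S ω) (D ω) (A ω) * S ω *
        (instrumentDeviation P Q (S ω) (D ω) (A ω))ᵀ) i j) ∧
    matExp (fun ω => instrumentDeviation P Q (S ω) (D ω) (A ω) * S ω *
        (instrumentDeviation P Q (S ω) (D ω) (A ω))ᵀ) =
      P * matExp (fun ω => A ω * S ω * (A ω)ᵀ) * Pᵀ - P * matExp (fun ω => A ω * D ω) * Qᵀ
        - Q * (matExp fun ω => A ω * D ω)ᵀ * Pᵀ
        + Q * matExp (fun ω => (D ω)ᵀ * (S ω)⁻¹ * D ω) * Qᵀ := by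
  have hDA : ∀ i j, Integrable fun ω => (A ω * D ω)ᵀ i j := fun i j => hAD j i
  have h1 := integrable_mul_mul_apply P Pᵀ hASA
  have h2 := integrable_mul_mul_apply P Qᵀ hAD
  have h3 := integrable_mul_mul_apply Q Pᵀ hDA
  have h4 := integrable_mul_mul_apply Q Qᵀ hDSD
  have h12 : ∀ i j, Integrable fun ω =>
      (P * (A ω * S ω * (A ω)ᵀ) * Pᵀ - P * (A ω * D ω) * Qᵀ) i j :=
    fun i j => (h1 i j).sub (h2 i j)
  have h123 : ∀ i j, Integrable fun ω =>
      (P * (A ω * S ω * (A ω)ᵀ) * Pᵀ - P * (A ω * D ω) * Qᵀ - Q * (A ω * D ω)ᵀ * Pᵀ) i j :=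
    fun i j => (h12 i j).sub (h3 i j)
  have hexpand := ae_instrumentDeviation_mul_mul_transpose hS D A P Q
  refine ⟨fun i j => ((h123 i j).add (h4 i j)).congr ?_, ?_⟩
  · filter_upwards [hexpand] with ω hω
    rw [hω]
    rfl
  · rw [matExp_congr_ae hexpand, matExp_add h123 h4, matExp_sub h12 h3, matExp_sub h1 h2,
      matExp_mul_mul P Pᵀ hASA, matExp_mul_mul P Qᵀ hAD, matExp_mul_mul Q Pᵀ hDA,
      matExp_mul_mul Q Qᵀ hDSD, matExp_transpose]

theorem smul_sum_matExp_instrumentDeviation_mul_mul_transpose {ι : Type*} (s : Finset ι)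
    (c : ℝ) {S : ι → Ω → Matrix k k ℝ} {D : ι → Ω → Matrix k q ℝ} {A : ι → Ω → Matrix q k ℝ}
    (hS : ∀ t, ∀ᵐ ω, (S t ω).PosDef)
    (hASA : ∀ t i j, Integrable fun ω => (A t ω * S t ω * (A t ω)ᵀ) i j)
    (hAD : ∀ t i j, Integrable fun ω => (A t ω * D t ω) i j)
    (hDSD : ∀ t i j, Integrable fun ω => ((D t ω)ᵀ * (S t ω)⁻¹ * D t ω) i j)
    (P Q : Matrix r q ℝ) :
    c • ∑ t ∈ s, matExp (fun ω => instrumentDeviation P Q (S t ω) (D t ω) (A t ω) * S t ω *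
        (instrumentDeviation P Q (S t ω) (D t ω) (A t ω))ᵀ) =
      P * (c • ∑ t ∈ s, matExp fun ω => A t ω * S t ω * (A t ω)ᵀ) * Pᵀ
        - P * (c • ∑ t ∈ s, matExp fun ω => A t ω * D t ω) * Qᵀ
        - Q * (c • ∑ t ∈ s, matExp fun ω => A t ω * D t ω)ᵀ * Pᵀ
        + Q * (c • ∑ t ∈ s, matExp fun ω => (D t ω)ᵀ * (S t ω)⁻¹ * D t ω) * Qᵀ := by
  rw [Finset.sum_congr rfl fun t _ =>
    (integrable_and_matExp_instrumentDeviation_mul_mul_transpose (hS t) (hASA t) (hAD t)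
      (hDSD t) P Q).2]
  simp only [Finset.sum_add_distrib, Finset.sum_sub_distrib, Matrix.mul_sum, Matrix.sum_mul,
    transpose_sum, Finset.smul_sum, smul_add, smul_sub, Matrix.mul_smul, Matrix.smul_mul,
    transpose_smul]

theorem not_ae_instrumentDeviation_inv_eq_zero [DecidableEq q] {S : Ω → Matrix k k ℝ}
    {D : Ω → Matrix k q ℝ} {A : Ω → Matrix q k ℝ} {P Q : Matrix q q ℝ} (hP : IsUnit P.det)
    (hQ : IsUnit Q.det)
    (hdev : ∀ C : Matrix q q ℝ, IsUnit C.det → 0 < volume {ω | A ω ≠ C * (D ω)ᵀ * (S ω)⁻¹}) :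
    ¬ ∀ᵐ ω, instrumentDeviation P⁻¹ Q⁻¹ (S ω) (D ω) (A ω) = 0 := by
  intro h
  have hC : IsUnit (P * Q⁻¹).det := by
    rw [det_mul]
    exact hP.mul (isUnit_nonsing_inv_det Q hQ)
  refine (hdev (P * Q⁻¹) hC).ne' (ae_iff.mp ?_)
  filter_upwards [h] with ω hω
  rw [instrumentDeviation, sub_eq_zero] at hω
  calc A ω = P * (P⁻¹ * A ω) := (mul_nonsing_inv_cancel_left P (A ω) hP).symm
    _ = P * Q⁻¹ * (D ω)ᵀ * (S ω)⁻¹ := by rw [hω]; simp only [Matrix.mul_assoc]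

end Instruments

theorem strict_suboptimality_of_inefficient_instruments_general
    {Ω : Type*} [MeasureSpace Ω]
    {k q T : ℕ} (hT : 1 ≤ T)
    (S : Fin T → Ω → Matrix (Fin k) (Fin k) ℝ)
    (D : Fin T → Ω → Matrix (Fin k) (Fin q) ℝ)
    (A : Fin T → Ω → Matrix (Fin q) (Fin k) ℝ)
    (hSpd : ∀ t, ∀ᵐ ω, (S t ω).PosDef)
    (hint1 : ∀ t i j, Integrable fun ω => (A t ω * S t ω * (A t ω)ᵀ) i j)
    (hint2 : ∀ t i j, Integrable fun ω => (A t ω * D t ω) i j)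
    (hint3 : ∀ t i j, Integrable fun ω => ((D t ω)ᵀ * (S t ω)⁻¹ * D t ω) i j)
    (SigT DeltaT LamT : Matrix (Fin q) (Fin q) ℝ)
    (hSig : SigT = (T : ℝ)⁻¹ • ∑ t : Fin T, matExp fun ω => A t ω * S t ω * (A t ω)ᵀ)
    (hDelta : DeltaT = (T : ℝ)⁻¹ • ∑ t : Fin T, matExp fun ω => A t ω * D t ω)
    (hLam : LamT = (T : ℝ)⁻¹ • ∑ t : Fin T, matExp fun ω => (D t ω)ᵀ * (S t ω)⁻¹ * D t ω)
    (hDeltaInv : IsUnit DeltaT.det) (hLamInv : IsUnit LamT.det)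
    (hdev : ∃ t : Fin T, ∀ C : Matrix (Fin q) (Fin q) ℝ, IsUnit C.det →
      0 < volume {ω | A t ω ≠ C * (D t ω)ᵀ * (S t ω)⁻¹}) :
    (DeltaT⁻¹ * SigT * (DeltaT⁻¹)ᵀ - LamT⁻¹).PosSemidef ∧
      (∃ j, 0 < (DeltaT⁻¹ * SigT * (DeltaT⁻¹)ᵀ - LamT⁻¹) j j) ∧
      DeltaT⁻¹ * SigT * (DeltaT⁻¹)ᵀ - LamT⁻¹ ≠ 0 := by
  obtain ⟨t₀, hdev⟩ := hdev
  set X := fun t ω => instrumentDeviation DeltaT⁻¹ LamT⁻¹ (S t ω) (D t ω) (A t ω)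
  set E := fun t => matExp fun ω => X t ω * S t ω * (X t ω)ᵀ
  have hX := fun t => integrable_and_matExp_instrumentDeviation_mul_mul_transpose (hSpd t)
    (hint1 t) (hint2 t) (hint3 t) DeltaT⁻¹ LamT⁻¹
  have hrep : DeltaT⁻¹ * SigT * (DeltaT⁻¹)ᵀ - LamT⁻¹ = (T : ℝ)⁻¹ • ∑ t, E t := by
    rw [smul_sum_matExp_instrumentDeviation_mul_mul_transpose _ _ hSpd hint1 hint2 hint3,
      ← hSig, ← hDelta, ← hLam, nonsing_inv_mul _ hDeltaInv, nonsing_inv_mul _ hLamInv,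
      Matrix.mul_assoc LamT⁻¹, ← transpose_mul, nonsing_inv_mul _ hDeltaInv]
    simp only [Matrix.one_mul, transpose_one, Matrix.mul_one]
    abel
  have hE : ∀ t, (E t).PosSemidef := fun t => matExp_posSemidef
    ((hSpd t).mono fun ω hω => hω.posSemidef.mul_mul_transpose_same _) (hX t).1
  obtain ⟨j, hj⟩ := exists_pos_diag_matExp_mul_mul_transpose (hSpd t₀) (hX t₀).1
    (not_ae_instrumentDeviation_inv_eq_zero hDeltaInv hLamInv hdev)
  have hTpos : (0 : ℝ) < (T : ℝ)⁻¹ := inv_pos.mpr (Nat.cast_pos.mpr hT)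
  have hdiag : 0 < (DeltaT⁻¹ * SigT * (DeltaT⁻¹)ᵀ - LamT⁻¹) j j := by
    rw [hrep, Matrix.smul_apply, Matrix.sum_apply, smul_eq_mul]
    exact mul_pos hTpos
      (Finset.sum_pos' (fun t _ => (hE t).diag_nonneg) ⟨t₀, Finset.mem_univ _, hj⟩)
  refine ⟨hrep ▸ (posSemidef_sum _ fun t _ => hE t).smul hTpos.le, ⟨j, hdiag⟩, fun h => ?_⟩
  rw [h] at hdiag
  exact lt_irrefl _ hdiag

/-- Theorem 1(iii): if for some `t` the instrument matrix deviates with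
positive probability from every efficient instrument `C Dᵀ S⁻¹` (for every deterministic
invertible `C`), then `Δ_{T,A}⁻¹ Σ_{T,A} (Δ_{T,A}⁻¹)ᵀ − Λ_T⁻¹` is positive semidefinite
with a strictly positive diagonal entry; in particular it is nonzero. -/
theorem strict_suboptimality_of_inefficient_instruments
    {Ω : Type*} [MeasureSpace Ω] [IsProbabilityMeasure (volume : Measure Ω)]
    {k q T : ℕ} (hk : 1 ≤ k) (hq : 1 ≤ q) (hT : 1 ≤ T)
    (S : Fin T → Ω → Matrix (Fin k) (Fin k) ℝ)
    (D : Fin T → Ω → Matrix (Fin k) (Fin q) ℝ)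
    (A : Fin T → Ω → Matrix (Fin q) (Fin k) ℝ)
    (hSmeas : ∀ t i j, Measurable fun ω => S t ω i j)
    (hDmeas : ∀ t i j, Measurable fun ω => D t ω i j)
    (hAmeas : ∀ t i j, Measurable fun ω => A t ω i j)
    (hSsymm : ∀ t, ∀ᵐ ω, (S t ω).IsSymm)
    (hSpd : ∀ t, ∀ᵐ ω, (S t ω).PosDef)
    (hint1 : ∀ t i j, Integrable fun ω => (A t ω * S t ω * (A t ω)ᵀ) i j)
    (hint2 : ∀ t i j, Integrable fun ω => (A t ω * D t ω) i j)
    (hint3 : ∀ t i j, Integrable fun ω => ((D t ω)ᵀ * (S t ω)⁻¹ * D t ω) i j)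
    (SigT DeltaT LamT : Matrix (Fin q) (Fin q) ℝ)
    (hSig : SigT = (T : ℝ)⁻¹ • ∑ t : Fin T, matExp fun ω => A t ω * S t ω * (A t ω)ᵀ)
    (hDelta : DeltaT = (T : ℝ)⁻¹ • ∑ t : Fin T, matExp fun ω => A t ω * D t ω)
    (hLam : LamT = (T : ℝ)⁻¹ • ∑ t : Fin T, matExp fun ω => (D t ω)ᵀ * (S t ω)⁻¹ * D t ω)
    (hDeltaInv : IsUnit DeltaT.det) (hLamInv : IsUnit LamT.det)
    (hdev : ∃ t : Fin T, ∀ C : Matrix (Fin q) (Fin q) ℝ, IsUnit C.det →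
      0 < volume {ω | A t ω ≠ C * (D t ω)ᵀ * (S t ω)⁻¹}) :
    (DeltaT⁻¹ * SigT * (DeltaT⁻¹)ᵀ - LamT⁻¹).PosSemidef ∧
      (∃ j, 0 < (DeltaT⁻¹ * SigT * (DeltaT⁻¹)ᵀ - LamT⁻¹) j j) ∧
      DeltaT⁻¹ * SigT * (DeltaT⁻¹)ᵀ - LamT⁻¹ ≠ 0 :=
  strict_suboptimality_of_inefficient_instruments_general hT S D A hSpd hint1 hint2 hint3 SigT
    DeltaT LamT hSig hDelta hLam hDeltaInv hLamInv hdev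
end

section
/- Necessity core of Theorem 2(B) (efficiency gap for double quantile models): In the double-quantile block setup, assume V_α ≠ 0 and V_β ≠ 0 ℙ-a.s., that V_α satisfies the richness condition in ℝ^{q₁} and V_β satisfies the richness condition in ℝ^{q₂}. If there exists an invertible deterministic matrix C ∈ ℝ^{q×q} such that A_g = C Dᵀ S⁻¹ ℙ-a.s., then there exist constants c₂ > 0 and c₃ > 0 such that w₁ = c₂ f_α ℙ-a.s. and w₂ = c₃ f_β ℙ-a.s. Consequently, if no such constants exist, then for every invertible deterministic C the M-estimator instrument matrix A_g differs from the efficient instrument matrix C Dᵀ S⁻¹ with positive probability. -/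
/-!
Multiplying `A_g = C Dᵀ S⁻¹` by `S` and reading the `α`-rows of the first column gives
`f_α C₁₁ V_α = S₀₀ w₁ V_α`, so almost surely `V_α` is an eigenvector of the fixed block `C₁₁` with
eigenvalue `S₀₀ w₁ / f_α` (likewise for `β`). If `n + 1` vectors of an `n`-dimensional space are
eigenvectors and any `n` of them are independent, then their linear relation has no zero
coefficient, which forces a common eigenvalue; richness provides such vectors inside every set of
full measure, so the eigenvalue is almost surely constant.
-/

open MeasureTheory Matrix

/-- The matrix `D` of the double-quantile block setup: first row `(f_α V_αᵀ, 0)`,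
second row `(0, f_β V_βᵀ)`. -/
def dqD {q₁ q₂ : ℕ} (fα fβ : ℝ) (Vα : Fin q₁ → ℝ) (Vβ : Fin q₂ → ℝ) :
    Matrix (Fin 2) (Fin q₁ ⊕ Fin q₂) ℝ :=
  Matrix.of fun i j =>
    Sum.elim (fun j₁ => if i = 0 then fα * Vα j₁ else 0)
      (fun j₂ => if i = 1 then fβ * Vβ j₂ else 0) j

/-- The M-estimator instrument matrix `A_g` of the double-quantile block setup:
first column `(w₁ V_α, 0)ᵀ`, second column `(0, w₂ V_β)ᵀ`. -/
def dqA {q₁ q₂ : ℕ} (w₁ w₂ : ℝ) (Vα : Fin q₁ → ℝ) (Vβ : Fin q₂ → ℝ) :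
    Matrix (Fin q₁ ⊕ Fin q₂) (Fin 2) ℝ :=
  Matrix.of fun i j =>
    Sum.elim (fun i₁ => if j = 0 then w₁ * Vα i₁ else 0)
      (fun i₂ => if j = 1 then w₂ * Vβ i₂ else 0) i

/-- Richness condition (condition (DQ2) of the paper). -/
def Rich {Ω : Type*} [MeasureSpace Ω] {n : ℕ} (V : Ω → Fin n → ℝ) : Prop :=
  ∀ B : Set Ω, MeasurableSet B → volume B = 1 →
    ∃ v : Fin (n + 1) → Fin n → ℝ, Function.Injective v ∧
      (∀ i, ∃ ω ∈ B, V ω = v i) ∧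
      ∀ i : Fin (n + 1),
        LinearIndependent ℝ fun j : {j : Fin (n + 1) // j ≠ i} => v j.1

section GeneralPosition

variable {K V ι : Type*} [Field K] [AddCommGroup V] [Module K V] [Fintype ι] {v : ι → V}

theorem eq_zero_of_sum_smul_eq_zero_of_apply_eq_zero
    (hv : ∀ i, LinearIndependent K fun j : {j // j ≠ i} => v j.1)
    {c : ι → K} (hc : ∑ i, c i • v i = 0) {k : ι} (hk : c k = 0) : c = 0 := by
  classical
  rw [Fintype.sum_eq_add_sum_subtype_ne _ k, hk, zero_smul, zero_add] at hc
  funext j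
  by_cases hj : j = k
  · rwa [hj]
  · exact Fintype.linearIndependent_iff.mp (hv k) (fun j => c j) hc ⟨j, hj⟩

theorem eigenvalues_eq_of_forall_linearIndependent_ne
    (hv : ∀ i, LinearIndependent K fun j : {j // j ≠ i} => v j.1) (hdep : ¬LinearIndependent K v)
    {f : Module.End K V} {lam : ι → K} (hf : ∀ i, f (v i) = lam i • v i) (i j : ι) :
    lam i = lam j := by
  obtain ⟨g, hg, i₀, hgi₀⟩ := Fintype.not_linearIndependent_iff.mp hdep
  have hg_ne : ∀ k, g k ≠ 0 := fun k hk =>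
    hgi₀ (congrFun (eq_zero_of_sum_smul_eq_zero_of_apply_eq_zero hv hg hk) i₀)
  have hshift : ∑ k, (g k * (lam k - lam j)) • v k = 0 := by
    calc ∑ k, (g k * (lam k - lam j)) • v k = f (∑ k, g k • v k) - lam j • ∑ k, g k • v k := by
          simp only [map_sum, map_smul, hf, Finset.smul_sum, smul_smul, mul_sub, sub_smul,
            Finset.sum_sub_distrib, mul_comm]
      _ = 0 := by rw [hg, map_zero, smul_zero, sub_zero]
  have := congrFun (eq_zero_of_sum_smul_eq_zero_of_apply_eq_zero hv hshift (k := j) (by simp)) i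
  simpa [sub_eq_zero, hg_ne i] using this

theorem Module.End.eq_smul_id_of_eigenvectors_in_general_position [FiniteDimensional K V]
    (hcard : Fintype.card ι = Module.finrank K V + 1)
    (hv : ∀ i, LinearIndependent K fun j : {j // j ≠ i} => v j.1)
    {f : Module.End K V} {lam : ι → K} (hf : ∀ i, f (v i) = lam i • v i) (i : ι) :
    f = lam i • LinearMap.id := by
  classical
  have hdep : ¬LinearIndependent K v := fun h => by
    have := h.fintype_card_le_finrank
    omega
  have hspan := (hv i).span_eq_top_of_card_eq_finrank' (by simp [hcard])
  refine LinearMap.ext_on_range hspan fun j => ?_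
  simp [hf, eigenvalues_eq_of_forall_linearIndependent_ne hv hdep hf j i]

end GeneralPosition

section Richness

variable {Ω : Type*} [MeasureSpace Ω] [IsProbabilityMeasure (volume : Measure Ω)] {n : ℕ}
  {V : Ω → Fin n → ℝ}

theorem Rich.exists_ae_eq_const_of_ae_mulVec_eq_smul (hV : Rich V) (hV0 : ∀ᵐ ω, V ω ≠ 0)
    (M : Matrix (Fin n) (Fin n) ℝ) {lam : Ω → ℝ} (hM : ∀ᵐ ω, M *ᵥ V ω = lam ω • V ω) :
    ∃ c, ∀ᵐ ω, lam ω = c := by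
  obtain ⟨B, hB_ae, hB_meas, hB⟩ := (hV0.and hM).exists_measurable_mem
  have hB_one : volume B = 1 := (prob_compl_eq_zero_iff hB_meas).mp (mem_ae_iff.mp hB_ae)
  obtain ⟨v, -, hv_mem, hv_ind⟩ := hV B hB_meas hB_one
  choose ω hωB hωv using hv_mem
  have hscalar := Module.End.eq_smul_id_of_eigenvectors_in_general_position (by simp) hv_ind
    (f := toLin' M) (lam := fun i => lam (ω i))
    (fun i => by rw [toLin'_apply, ← hωv i, (hB _ (hωB i)).2]) 0
  refine ⟨lam (ω 0), ?_⟩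
  filter_upwards [hB_ae] with ω' hω'
  obtain ⟨hne, heig⟩ := hB ω' hω'
  have := LinearMap.congr_fun hscalar (V ω')
  rw [toLin'_apply, heig] at this
  exact smul_left_injective ℝ hne this

theorem Rich.exists_pos_ae_eq_const_mul (hV : Rich V) (hV0 : ∀ᵐ ω, V ω ≠ 0)
    (M : Matrix (Fin n) (Fin n) ℝ) {f g : Ω → ℝ} (hf : ∀ᵐ ω, 0 < f ω) (hg : ∀ᵐ ω, 0 < g ω)
    (h : ∀ᵐ ω, f ω • (M *ᵥ V ω) = g ω • V ω) : ∃ c > 0, ∀ᵐ ω, g ω = c * f ω := by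
  obtain ⟨c, hc⟩ := hV.exists_ae_eq_const_of_ae_mulVec_eq_smul hV0 M (lam := fun ω => g ω / f ω)
    (by
      filter_upwards [h, hf] with ω hω hfω
      rw [div_eq_inv_mul, mul_smul, ← hω, inv_smul_smul₀ hfω.ne'])
  have hgc : ∀ᵐ ω, g ω = c * f ω := by
    filter_upwards [hc, hf] with ω hω hfω
    rw [← hω, div_mul_cancel₀ _ hfω.ne']
  obtain ⟨ω, hgω, hfω, hgpos⟩ := (hgc.and (hf.and hg)).exists
  exact ⟨c, pos_of_mul_pos_left (hgω ▸ hgpos) hfω.le, hgc⟩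

end Richness

section Blocks

variable {q₁ q₂ : ℕ} {fα fβ w₁ w₂ : ℝ} {Vα : Fin q₁ → ℝ} {Vβ : Fin q₂ → ℝ}
  {S : Matrix (Fin 2) (Fin 2) ℝ} {C : Matrix (Fin q₁ ⊕ Fin q₂) (Fin q₁ ⊕ Fin q₂) ℝ}

theorem smul_toBlocks₁₁_mulVec_of_dqA_mul_eq (h : dqA w₁ w₂ Vα Vβ * S = C * (dqD fα fβ Vα Vβ)ᵀ) :
    fα • (C.toBlocks₁₁ *ᵥ Vα) = (S 0 0 * w₁) • Vα := by
  funext i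
  have := congrFun (congrFun h (Sum.inl i)) 0
  simp only [dqA, dqD, mul_apply, transpose_apply, of_apply, Fintype.sum_sum_type, Sum.elim_inl,
    Sum.elim_inr, ite_mul, zero_mul, mul_zero, Finset.sum_ite_eq', Finset.mem_univ, if_true,
    Finset.sum_const_zero, add_zero, zero_ne_one, if_false] at this
  simp only [Pi.smul_apply, smul_eq_mul, mulVec, dotProduct, toBlocks₁₁, of_apply, Finset.mul_sum]
  rw [show S 0 0 * w₁ * Vα i = w₁ * Vα i * S 0 0 by ring, this]
  exact Finset.sum_congr rfl fun _ _ => by ring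

theorem smul_toBlocks₂₂_mulVec_of_dqA_mul_eq (h : dqA w₁ w₂ Vα Vβ * S = C * (dqD fα fβ Vα Vβ)ᵀ) :
    fβ • (C.toBlocks₂₂ *ᵥ Vβ) = (S 1 1 * w₂) • Vβ := by
  funext i
  have := congrFun (congrFun h (Sum.inr i)) 1
  simp only [dqA, dqD, mul_apply, transpose_apply, of_apply, Fintype.sum_sum_type, Sum.elim_inl,
    Sum.elim_inr, ite_mul, zero_mul, mul_zero, Finset.sum_ite_eq', Finset.mem_univ, if_true,
    Finset.sum_const_zero, zero_add, one_ne_zero, if_false] at this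
  simp only [Pi.smul_apply, smul_eq_mul, mulVec, dotProduct, toBlocks₂₂, of_apply, Finset.mul_sum]
  rw [show S 1 1 * w₂ * Vβ i = w₂ * Vβ i * S 1 1 by ring, this]
  exact Finset.sum_congr rfl fun _ _ => by ring

end Blocks

section EfficientInstrument

variable {Ω : Type*} [MeasureSpace Ω] [IsProbabilityMeasure (volume : Measure Ω)] {q₁ q₂ : ℕ}
  {Vα : Ω → Fin q₁ → ℝ} {Vβ : Ω → Fin q₂ → ℝ} {fα fβ w₁ w₂ : Ω → ℝ}

theorem exists_pos_ae_eq_const_mul_of_ae_dqA_eq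
    (hfα : ∀ᵐ ω, 0 < fα ω) (hfβ : ∀ᵐ ω, 0 < fβ ω) (hw₁ : ∀ᵐ ω, 0 < w₁ ω) (hw₂ : ∀ᵐ ω, 0 < w₂ ω)
    (hVα : ∀ᵐ ω, Vα ω ≠ 0) (hVβ : ∀ᵐ ω, Vβ ω ≠ 0) (hrichα : Rich Vα) (hrichβ : Rich Vβ)
    {S : Matrix (Fin 2) (Fin 2) ℝ} (hS₀₀ : 0 < S 0 0) (hS₁₁ : 0 < S 1 1) (hS : IsUnit S.det)
    {C : Matrix (Fin q₁ ⊕ Fin q₂) (Fin q₁ ⊕ Fin q₂) ℝ}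
    (hC : ∀ᵐ ω, dqA (w₁ ω) (w₂ ω) (Vα ω) (Vβ ω) = C * (dqD (fα ω) (fβ ω) (Vα ω) (Vβ ω))ᵀ * S⁻¹) :
    ∃ c₂ > (0 : ℝ), ∃ c₃ > (0 : ℝ),
      (∀ᵐ ω, w₁ ω = c₂ * fα ω) ∧ (∀ᵐ ω, w₂ ω = c₃ * fβ ω) := by
  have hCS : ∀ᵐ ω, dqA (w₁ ω) (w₂ ω) (Vα ω) (Vβ ω) * S
      = C * (dqD (fα ω) (fβ ω) (Vα ω) (Vβ ω))ᵀ :=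
    hC.mono fun ω h => by rw [h]; exact nonsing_inv_mul_cancel_right _ _ hS
  obtain ⟨c₂, hc₂, h₂⟩ := hrichα.exists_pos_ae_eq_const_mul hVα C.toBlocks₁₁ hfα
    (hw₁.mono fun _ => mul_pos hS₀₀) (hCS.mono fun _ => smul_toBlocks₁₁_mulVec_of_dqA_mul_eq)
  obtain ⟨c₃, hc₃, h₃⟩ := hrichβ.exists_pos_ae_eq_const_mul hVβ C.toBlocks₂₂ hfβ
    (hw₂.mono fun _ => mul_pos hS₁₁) (hCS.mono fun _ => smul_toBlocks₂₂_mulVec_of_dqA_mul_eq)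
  refine ⟨c₂ / S 0 0, div_pos hc₂ hS₀₀, c₃ / S 1 1, div_pos hc₃ hS₁₁,
    h₂.mono fun ω h => ?_, h₃.mono fun ω h => ?_⟩
  · field_simp; linarith
  · field_simp; linarith

end EfficientInstrument

theorem dq_efficiency_gap_necessity_general
    {Ω : Type*} [MeasureSpace Ω] [IsProbabilityMeasure (volume : Measure Ω)]
    {q₁ q₂ : ℕ}
    {α β : ℝ} (hα : 0 < α) (hαβ : α < β) (hβ : β < 1)
    (Vα : Ω → Fin q₁ → ℝ) (Vβ : Ω → Fin q₂ → ℝ) (fα fβ w₁ w₂ : Ω → ℝ)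
    (hfαpos : ∀ᵐ ω, 0 < fα ω) (hfβpos : ∀ᵐ ω, 0 < fβ ω)
    (hw₁pos : ∀ᵐ ω, 0 < w₁ ω) (hw₂pos : ∀ᵐ ω, 0 < w₂ ω)
    (hVαne : ∀ᵐ ω, Vα ω ≠ 0) (hVβne : ∀ᵐ ω, Vβ ω ≠ 0)
    (hrichα : Rich Vα) (hrichβ : Rich Vβ)
    (S : Matrix (Fin 2) (Fin 2) ℝ)
    (hS : S = !![α * (1 - α), α * (1 - β); α * (1 - β), β * (1 - β)]) :
    (∀ C : Matrix (Fin q₁ ⊕ Fin q₂) (Fin q₁ ⊕ Fin q₂) ℝ, IsUnit C.det →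
      (∀ᵐ ω, dqA (w₁ ω) (w₂ ω) (Vα ω) (Vβ ω)
          = C * (dqD (fα ω) (fβ ω) (Vα ω) (Vβ ω))ᵀ * S⁻¹) →
      ∃ c₂ > (0 : ℝ), ∃ c₃ > (0 : ℝ),
        (∀ᵐ ω, w₁ ω = c₂ * fα ω) ∧ (∀ᵐ ω, w₂ ω = c₃ * fβ ω)) ∧
    ((¬ ∃ c₂ > (0 : ℝ), ∃ c₃ > (0 : ℝ),
        (∀ᵐ ω, w₁ ω = c₂ * fα ω) ∧ (∀ᵐ ω, w₂ ω = c₃ * fβ ω)) →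
      ∀ C : Matrix (Fin q₁ ⊕ Fin q₂) (Fin q₁ ⊕ Fin q₂) ℝ, IsUnit C.det →
        0 < volume {ω | dqA (w₁ ω) (w₂ ω) (Vα ω) (Vβ ω)
          ≠ C * (dqD (fα ω) (fβ ω) (Vα ω) (Vβ ω))ᵀ * S⁻¹}) := by
  have hS₀₀ : 0 < S 0 0 := by simpa [hS] using mul_pos hα (by linarith : 0 < 1 - α)
  have hS₁₁ : 0 < S 1 1 := by simpa [hS] using mul_pos (hα.trans hαβ) (by linarith : 0 < 1 - β)
  have hS_det : IsUnit S.det := by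
    have : S.det = α * (1 - β) * (β - α) := by rw [hS, det_fin_two_of]; ring
    exact (this ▸ mul_pos (mul_pos hα (by linarith)) (by linarith)).ne'.isUnit
  have necessity := fun C => exists_pos_ae_eq_const_mul_of_ae_dqA_eq hfαpos hfβpos hw₁pos hw₂pos
    hVαne hVβne hrichα hrichβ hS₀₀ hS₁₁ hS_det (C := C)
  refine ⟨fun C _ => necessity C, fun hno C _ => ?_⟩
  rw [pos_iff_ne_zero, Ne, ← ae_iff]
  exact fun h => hno (necessity C h)

/-- Necessity core of Theorem 2(B): if the M-estimator instrument matrix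
`A_g` coincides a.s. with an efficient instrument `C Dᵀ S⁻¹` for some deterministic
invertible `C`, then `w₁ = c₂ f_α` and `w₂ = c₃ f_β` a.s. for some constants
`c₂, c₃ > 0`; consequently, if no such constants exist, then for every invertible
deterministic `C` the matrix `A_g` differs from `C Dᵀ S⁻¹` with positive probability. -/
theorem dq_efficiency_gap_necessity
    {Ω : Type*} [MeasureSpace Ω] [IsProbabilityMeasure (volume : Measure Ω)]
    {q₁ q₂ : ℕ} (hq₁ : 1 ≤ q₁) (hq₂ : 1 ≤ q₂)
    {α β : ℝ} (hα : 0 < α) (hαβ : α < β) (hβ : β < 1)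
    (Vα : Ω → Fin q₁ → ℝ) (Vβ : Ω → Fin q₂ → ℝ) (fα fβ w₁ w₂ : Ω → ℝ)
    (hVαmeas : Measurable Vα) (hVβmeas : Measurable Vβ)
    (hfαmeas : Measurable fα) (hfβmeas : Measurable fβ)
    (hw₁meas : Measurable w₁) (hw₂meas : Measurable w₂)
    (hfαpos : ∀ᵐ ω, 0 < fα ω) (hfβpos : ∀ᵐ ω, 0 < fβ ω)
    (hw₁pos : ∀ᵐ ω, 0 < w₁ ω) (hw₂pos : ∀ᵐ ω, 0 < w₂ ω)
    (hVαne : ∀ᵐ ω, Vα ω ≠ 0) (hVβne : ∀ᵐ ω, Vβ ω ≠ 0)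
    (hrichα : Rich Vα) (hrichβ : Rich Vβ)
    (S : Matrix (Fin 2) (Fin 2) ℝ)
    (hS : S = !![α * (1 - α), α * (1 - β); α * (1 - β), β * (1 - β)]) :
    (∀ C : Matrix (Fin q₁ ⊕ Fin q₂) (Fin q₁ ⊕ Fin q₂) ℝ, IsUnit C.det →
      (∀ᵐ ω, dqA (w₁ ω) (w₂ ω) (Vα ω) (Vβ ω)
          = C * (dqD (fα ω) (fβ ω) (Vα ω) (Vβ ω))ᵀ * S⁻¹) →
      ∃ c₂ > (0 : ℝ), ∃ c₃ > (0 : ℝ),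
        (∀ᵐ ω, w₁ ω = c₂ * fα ω) ∧ (∀ᵐ ω, w₂ ω = c₃ * fβ ω)) ∧
    ((¬ ∃ c₂ > (0 : ℝ), ∃ c₃ > (0 : ℝ),
        (∀ᵐ ω, w₁ ω = c₂ * fα ω) ∧ (∀ᵐ ω, w₂ ω = c₃ * fβ ω)) →
      ∀ C : Matrix (Fin q₁ ⊕ Fin q₂) (Fin q₁ ⊕ Fin q₂) ℝ, IsUnit C.det →
        0 < volume {ω | dqA (w₁ ω) (w₂ ω) (Vα ω) (Vβ ω)
          ≠ C * (dqD (fα ω) (fβ ω) (Vα ω) (Vβ ω))ᵀ * S⁻¹}) :=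
  dq_efficiency_gap_necessity_general hα hαβ hβ Vα Vβ fα fβ w₁ w₂ hfαpos hfβpos hw₁pos hw₂pos hVαne
    hVβne hrichα hrichβ S hS
end
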